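/- arXiv:2603.24229 — 5 statements merged into one kernel-verified Lean document; each statement's English description precedes it below -/
import Mathlib

section
/- Let N : ℝ → ℝ be differentiable with N(t) < 0 on [a,b], and δ < 0, satisfying N'(t) ≥ δ·N(t)². Then for all t ∈ [a, min(a + 1/(N(a)·δ), b)), one has N(t) ≥ 1/(N(a)⁻¹ − δ(t−a)). -/
/-!
The substitution `g t = (N t)⁻¹ + δ t` linearises the Riccati inequality `δ N² ≤ N'`:
`g' = -N' / N² + δ ≤ 0`, so `g` is antitone and `(N t)⁻¹ ≤ (N a)⁻¹ - δ (t - a)`.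
Before the blow-up time `a + 1 / (N a δ)` the right-hand side is still negative, and
inverting the inequality between negative numbers gives the bound.
-/

open Set

theorem antitoneOn_inv_add_mul_of_riccati {s : Set ℝ} (hs : Convex ℝ s) {δ : ℝ}
    {N N' : ℝ → ℝ} (hderiv : ∀ t ∈ s, HasDerivAt N (N' t) t) (hN : ∀ t ∈ s, N t ≠ 0)
    (hric : ∀ t ∈ s, δ * N t ^ 2 ≤ N' t) :
    AntitoneOn (fun t => (N t)⁻¹ + δ * t) s := by
  have hg : ∀ t ∈ s, HasDerivAt (fun t => (N t)⁻¹ + δ * t) (-N' t / N t ^ 2 + δ) t :=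
    fun t ht => ((hderiv t ht).inv (hN t ht)).add
      (((hasDerivAt_id t).const_mul δ).congr_deriv (mul_one δ))
  refine antitoneOn_of_hasDerivWithinAt_nonpos hs
    (fun t ht => (hg t ht).continuousAt.continuousWithinAt)
    (fun t ht => (hg t (interior_subset ht)).hasDerivWithinAt) fun t ht => ?_
  have ht := interior_subset ht
  have hδ : δ ≤ N' t / N t ^ 2 := (le_div_iff₀ (by positivity [hN t ht])).mpr (hric t ht)
  rw [neg_div]
  linarith

theorem inv_sub_mul_neg_of_lt_one_div {x δ s : ℝ} (hx : x < 0) (hs : 0 ≤ s)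
    (hsx : s < 1 / (x * δ)) : x⁻¹ - δ * s < 0 := by
  have hxδ : 0 < x * δ := one_div_pos.mp (hs.trans_lt hsx)
  have hsxδ : s * (x * δ) < 1 := (lt_div_iff₀ hxδ).mp hsx
  have : x⁻¹ - δ * s = (1 - s * (x * δ)) / x := by field_simp [hx.ne]
  rw [this]
  exact div_neg_of_pos_of_neg (by linarith) hx

theorem frequency_lower_bound_fast_diffusion_general
    (a b δ : ℝ)
    (N N' : ℝ → ℝ)
    (hderiv : ∀ t ∈ Icc a b, HasDerivAt N (N' t) t)
    (hNneg : ∀ t ∈ Icc a b, N t < 0)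
    (hric : ∀ t ∈ Icc a b, δ * (N t) ^ 2 ≤ N' t) :
    ∀ t ∈ Ico a (min (a + 1 / (N a * δ)) b),
      1 / ((N a)⁻¹ - δ * (t - a)) ≤ N t := by
  rintro t ⟨hat, htlt⟩
  have htb : t ∈ Icc a b := ⟨hat, (htlt.trans_le (min_le_right _ _)).le⟩
  have ha : a ∈ Icc a b := ⟨le_rfl, hat.trans htb.2⟩
  have hmono : (N t)⁻¹ + δ * t ≤ (N a)⁻¹ + δ * a :=
    antitoneOn_inv_add_mul_of_riccati (convex_Icc a b) hderiv
      (fun t ht => (hNneg t ht).ne) hric ha htb hat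
  have hden : (N a)⁻¹ - δ * (t - a) < 0 :=
    inv_sub_mul_neg_of_lt_one_div (hNneg a ha) (sub_nonneg.mpr hat)
      (by linarith [htlt.trans_le (min_le_left _ _)])
  rw [one_div, inv_le_of_neg hden (hNneg t htb)]
  linarith

theorem frequency_lower_bound_fast_diffusion
    (a b δ : ℝ) (hab : a < b) (hδ : δ < 0)
    (N N' : ℝ → ℝ)
    (hderiv : ∀ t ∈ Icc a b, HasDerivAt N (N' t) t)
    (hNneg : ∀ t ∈ Icc a b, N t < 0)
    (hric : ∀ t ∈ Icc a b, δ * (N t) ^ 2 ≤ N' t) :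
    ∀ t ∈ Ico a (min (a + 1 / (N a * δ)) b),
      1 / ((N a)⁻¹ - δ * (t - a)) ≤ N t :=
  frequency_lower_bound_fast_diffusion_general a b δ N N' hderiv hNneg hric
end

section
/- Let f, g : ℝ → ℝ be differentiable on (a,∞) with g(t) = f'(t) (interpreted pointwise), and suppose G(t) := −δ⁻¹·(d/dt)(I(t)^(−δ/(q+1))) is monotone increasing and nonpositive on (a,∞), where I is positive and differentiable, δ > 0, q > 0. Then for t > a+1, I(t) ≥ (I(a+1)^(−δ/(q+1)) + δ(t−a−1)·(−G(a+1)))^(−(q+1)/δ). In particular, I cannot satisfy I(t) ≤ C(t−a+1)^(−k) for every positive integer k with constants C depending on k, unless I ≡ 0. -/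
/-!
Writing `J = I ^ (-δ/(q+1))`, the hypothesis says `J' = -δ G`, and `G` is increasing, so on
`[a+1, ∞)` the derivative of `J` is at most `-δ G(a+1)`. Hence `J` grows at most linearly, and
raising to the negative power `-(q+1)/δ` turns this into a polynomial lower bound
`I(t) ≳ (t - a + 1)^(-(q+1)/δ)`, which is incompatible with decay faster than every power.
-/

open Set Filter

lemma le_rpow_inv_of_deriv_rpow_le {I : ℝ → ℝ} {p b M t : ℝ} (hp : p < 0)
    (hpos : ∀ s ∈ Ici b, 0 < I s) (hdiff : ∀ s ∈ Ici b, DifferentiableAt ℝ I s)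
    (hderiv : ∀ s ∈ Ioi b, deriv (fun s => I s ^ p) s ≤ M) (ht : b ≤ t) :
    (I b ^ p + M * (t - b)) ^ p⁻¹ ≤ I t := by
  have hJdiff : ∀ s ∈ Ici b, DifferentiableAt ℝ (fun s => I s ^ p) s := fun s hs =>
    (hdiff s hs).rpow_const (Or.inl (hpos s hs).ne')
  have hlinear : I t ^ p ≤ I b ^ p + M * (t - b) := by
    have := (convex_Ici b).image_sub_le_mul_sub_of_deriv_le
      (fun s hs => (hJdiff s hs).continuousAt.continuousWithinAt)
      (fun s hs => (hJdiff s (interior_subset hs)).differentiableWithinAt)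
      (by rwa [interior_Ici]) b self_mem_Ici t ht ht
    linarith
  calc (I b ^ p + M * (t - b)) ^ p⁻¹
      ≤ (I t ^ p) ^ p⁻¹ :=
        Real.rpow_le_rpow_of_nonpos (Real.rpow_pos_of_pos (hpos t ht) p) hlinear
          (inv_nonpos.2 hp.le)
    _ = I t := Real.rpow_rpow_inv (hpos t ht).le hp.ne

lemma mul_rpow_neg_le_rpow_neg_add_mul {A B α s y : ℝ} (hA : 0 < A) (hB : 0 ≤ B)
    (hα : 0 ≤ α) (hs : 0 ≤ s) (hy : 1 ≤ y) (hsy : s ≤ y) :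
    (A + B) ^ (-α) * y ^ (-α) ≤ (A + B * s) ^ (-α) := by
  have hx : 0 < A + B * s := by positivity
  have hxy : A + B * s ≤ (A + B) * y := by nlinarith
  rw [← Real.mul_rpow (by positivity) (by positivity)]
  exact Real.rpow_le_rpow_of_nonpos hx hxy (neg_nonpos.2 hα)

lemma eventually_mul_rpow_neg_lt {α β c : ℝ} (C : ℝ) (hαβ : α < β) (hc : 0 < c) :
    ∀ᶠ y in atTop, C * y ^ (-β) < c * y ^ (-α) := by
  filter_upwards [(tendsto_rpow_atTop (sub_pos.2 hαβ)).eventually_gt_atTop (C / c),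
    eventually_gt_atTop 0] with y hlarge hy
  have hsplit : y ^ (-α) = y ^ (β - α) * y ^ (-β) := by
    rw [← Real.rpow_add hy]; ring_nf
  rw [hsplit, ← mul_assoc]
  exact mul_lt_mul_of_pos_right ((div_lt_iff₀' hc).1 hlarge) (Real.rpow_pos_of_pos hy _)

lemma not_forall_le_rpow_neg_of_le_rpow_neg {I : ℝ → ℝ} {a α c : ℝ} (hc : 0 < c)
    (hlow : ∀ t, a + 1 < t → c * (t - a + 1) ^ (-α) ≤ I t) :
    ¬ ∀ k : ℕ, 0 < k → ∃ C : ℝ, 0 < C ∧ ∀ t ∈ Ioi a, I t ≤ C * (t - a + 1) ^ (-(k : ℝ)) := by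
  intro hdecay
  obtain ⟨C, -, hC⟩ := hdecay (⌈α⌉₊ + 1) (Nat.succ_pos _)
  have hk : α < ((⌈α⌉₊ + 1 : ℕ) : ℝ) := by
    push_cast; linarith [Nat.le_ceil α]
  have hshift : Tendsto (fun t => t - a + 1) atTop atTop :=
    tendsto_atTop_add_const_right _ _ (tendsto_atTop_add_const_right _ _ tendsto_id)
  obtain ⟨t, hlt, ht⟩ := ((hshift.eventually (eventually_mul_rpow_neg_lt C hk hc)).and
    (eventually_gt_atTop (a + 1))).exists
  exact (hlt.trans_le (hlow t ht)).not_ge (hC t (mem_Ioi.2 (by linarith)))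

theorem vanishing_order_bound_and_unique_continuation
    (a q δ : ℝ) (hq : 0 < q) (hδ : 0 < δ)
    (I : ℝ → ℝ)
    (hIpos : ∀ t ∈ Ioi a, 0 < I t)
    (hIdiff : ∀ t ∈ Ioi a, DifferentiableAt ℝ I t)
    (G : ℝ → ℝ)
    (hG : ∀ t ∈ Ioi a, G t = -δ⁻¹ * deriv (fun s => I s ^ (-δ / (q + 1))) t)
    (hGmono : MonotoneOn G (Ioi a))
    (hGnonpos : ∀ t ∈ Ioi a, G t ≤ 0) :
    (∀ t, a + 1 < t →
      (I (a + 1) ^ (-δ / (q + 1)) + δ * (t - a - 1) * (-G (a + 1))) ^ (-(q + 1) / δ)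
        ≤ I t) ∧
    ¬ (∀ k : ℕ, 0 < k → ∃ C : ℝ, 0 < C ∧ ∀ t ∈ Ioi a, I t ≤ C * (t - a + 1) ^ (-(k : ℝ))) := by
  have ha : a + 1 ∈ Ioi a := mem_Ioi.2 (by linarith)
  have hIci : Ici (a + 1) ⊆ Ioi a := Ici_subset_Ioi.2 (by linarith)
  have hp : -δ / (q + 1) < 0 := div_neg_of_neg_of_pos (by linarith) (by linarith)
  have hderiv : ∀ s ∈ Ioi (a + 1),
      deriv (fun s => I s ^ (-δ / (q + 1))) s ≤ δ * -G (a + 1) := by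
    intro s hs
    have hsa : s ∈ Ioi a := hIci (Ioi_subset_Ici_self hs)
    have hGs : G (a + 1) ≤ G s := hGmono ha hsa (le_of_lt hs)
    have hJ' : deriv (fun s => I s ^ (-δ / (q + 1))) s = -δ * G s := by
      rw [hG s hsa]; field_simp
    rw [hJ']; nlinarith
  have hlower : ∀ t, a + 1 < t →
      (I (a + 1) ^ (-δ / (q + 1)) + δ * (t - a - 1) * (-G (a + 1))) ^ (-(q + 1) / δ) ≤ I t := by
    intro t ht
    have := le_rpow_inv_of_deriv_rpow_le hp (fun s hs => hIpos s (hIci hs))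
      (fun s hs => hIdiff s (hIci hs)) hderiv ht.le
    rw [inv_div, div_neg, ← neg_div] at this
    convert this using 2; ring
  have hA : 0 < I (a + 1) ^ (-δ / (q + 1)) := Real.rpow_pos_of_pos (hIpos _ ha) _
  have hB : 0 ≤ δ * -G (a + 1) := mul_nonneg hδ.le (neg_nonneg.2 (hGnonpos _ ha))
  refine ⟨hlower, not_forall_le_rpow_neg_of_le_rpow_neg (α := (q + 1) / δ)
    (Real.rpow_pos_of_pos (add_pos_of_pos_of_nonneg hA hB) (-((q + 1) / δ))) fun t ht => ?_⟩
  calc _ ≤ (I (a + 1) ^ (-δ / (q + 1)) + δ * -G (a + 1) * (t - a - 1)) ^ (-((q + 1) / δ)) :=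
        mul_rpow_neg_le_rpow_neg_add_mul hA hB (by positivity) (by linarith) (by linarith)
          (by linarith)
    _ ≤ I t := by
        convert hlower t ht using 2 <;> ring
end

section
/- Let N : ℝ → ℝ be differentiable on (−∞, 0) with N(t) ≤ 0, and suppose N'(t) ≥ δ·N(t)² with δ > 0, and N is monotone increasing. Then N(t) = 0 for all t < 0. -/
/-!
If `N(t₀) < 0`, monotonicity keeps `N` negative on `(-∞, t₀]`, where `-1/N` is positive and has
derivative `N'/N² ≥ δ`. Going back from `t₀` for a time `-1/(δ N(t₀))` would then drive `-1/N`
down to `0`, which is impossible.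
-/

open Set

theorem mul_sub_le_inv_sub_inv_of_sq_le_deriv {D : Set ℝ} (hD : Convex ℝ D) {δ : ℝ}
    {N N' : ℝ → ℝ} (hderiv : ∀ t ∈ D, HasDerivAt N (N' t) t) (hne : ∀ t ∈ D, N t ≠ 0)
    (hric : ∀ t ∈ D, δ * N t ^ 2 ≤ N' t) {a b : ℝ} (ha : a ∈ D) (hb : b ∈ D) (hab : a ≤ b) :
    δ * (b - a) ≤ (N a)⁻¹ - (N b)⁻¹ := by
  have hrecip : ∀ t ∈ D, HasDerivAt (fun s => -(N s)⁻¹) (N' t / N t ^ 2) t := fun t ht =>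
    ((hderiv t ht).inv (hne t ht)).neg.congr_deriv (by ring)
  have hrate : ∀ t ∈ interior D, δ ≤ deriv (fun s => -(N s)⁻¹) t := by
    intro t ht
    rw [(hrecip t (interior_subset ht)).deriv,
      le_div_iff₀ (sq_pos_of_ne_zero (hne t (interior_subset ht)))]
    exact hric t (interior_subset ht)
  have := hD.mul_sub_le_image_sub_of_le_deriv
    (fun t ht => (hrecip t ht).continuousAt.continuousWithinAt)
    (fun t ht => (hrecip t (interior_subset ht)).differentiableAt.differentiableWithinAt)
    hrate a ha b hb hab
  linarith

theorem ancient_frequency_vanishes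
    (δ : ℝ) (hδ : 0 < δ)
    (N N' : ℝ → ℝ)
    (hderiv : ∀ t ∈ Iio (0 : ℝ), HasDerivAt N (N' t) t)
    (hNnonpos : ∀ t ∈ Iio (0 : ℝ), N t ≤ 0)
    (hric : ∀ t ∈ Iio (0 : ℝ), δ * (N t) ^ 2 ≤ N' t)
    (hmono : MonotoneOn N (Iio (0 : ℝ))) :
    ∀ t ∈ Iio (0 : ℝ), N t = 0 := by
  intro t ht
  by_contra hNt
  have hlt : N t < 0 := (hNnonpos t ht).lt_of_ne hNt
  have hpast : Iic t ⊆ Iio 0 := Iic_subset_Iio.2 ht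
  have hneg : ∀ s ∈ Iic t, N s < 0 := fun s hs => (hmono (hpast hs) ht hs).trans_lt hlt
  set a := t + (N t)⁻¹ / δ
  have ha : a ≤ t := by
    have := div_neg_of_neg_of_pos (inv_lt_zero.2 hlt) hδ
    linarith
  have hlen : δ * (t - a) = -(N t)⁻¹ := by
    simp only [a]
    field_simp
    ring
  have := mul_sub_le_inv_sub_inv_of_sq_le_deriv (convex_Iic t) (fun s hs => hderiv s (hpast hs))
    (fun s hs => (hneg s hs).ne) (fun s hs => hric s (hpast hs)) ha (mem_Iic.2 le_rfl) ha
  linarith [inv_lt_zero.2 (hneg a ha)]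
end

section
/- Let N : ℝ → ℝ be differentiable, nonpositive, and monotone increasing on (−∞, 0), and let I : (−∞,0) → ℝ be positive and differentiable with (d/dt) log I(t) = (q+1)·N(t) for some q > 0. If there exist C, d > 0 with I(t) ≤ C(1+|t|)^d for all t < 0, then N(t) = 0 for all t < 0. -/
/-!
If `N t₀ < 0`, monotonicity gives `(log I)' = (q + 1) N ≤ (q + 1) N t₀ < 0` on `(-∞, t₀]`,
so `I t` grows at least like `exp (-(q + 1) N t₀ · (t₀ - t))` as `t → -∞`. An exponential
eventually beats every power `(1 + |t|) ^ d`, contradicting the growth bound.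
-/

open Set Real Filter Asymptotics

theorem sub_le_mul_sub_of_hasDerivAt_le_Iic {f f' : ℝ → ℝ} {b C : ℝ}
    (hf : ∀ x ≤ b, HasDerivAt f (f' x) x) (hf' : ∀ x ≤ b, f' x ≤ C) {t : ℝ} (ht : t ≤ b) :
    f b - f t ≤ C * (b - t) := by
  have hdiff : ∀ x ≤ b, DifferentiableAt ℝ f x := fun x hx => (hf x hx).differentiableAt
  refine (convex_Iic b).image_sub_le_mul_sub_of_deriv_le
    (fun x hx => (hdiff x hx).continuousAt.continuousWithinAt)
    (fun x hx => (hdiff x (interior_subset hx : x ∈ Iic b)).differentiableWithinAt)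
    (fun x hx => ?_) t ht b (mem_Iic.2 le_rfl) ht
  have hxb : x ∈ Iic b := interior_subset hx
  exact (hf x hxb).deriv ▸ hf' x hxb

theorem mul_exp_le_of_hasDerivAt_log_le {I g : ℝ → ℝ} {b c : ℝ} (hpos : ∀ x ≤ b, 0 < I x)
    (hderiv : ∀ x ≤ b, HasDerivAt (fun s => log (I s)) (g x) x) (hg : ∀ x ≤ b, g x ≤ c)
    {t : ℝ} (ht : t ≤ b) : I b * exp (-c * (b - t)) ≤ I t := by
  have hlog := sub_le_mul_sub_of_hasDerivAt_le_Iic hderiv hg ht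
  calc I b * exp (-c * (b - t)) = exp (log (I b) + -c * (b - t)) := by
        rw [exp_add, exp_log (hpos b le_rfl)]
    _ ≤ exp (log (I t)) := exp_le_exp.mpr (by linarith)
    _ = I t := exp_log (hpos t ht)

theorem isLittleO_one_add_abs_rpow_exp_neg_mul_atBot (d : ℝ) {a : ℝ} (ha : 0 < a) :
    (fun t : ℝ => (1 + |t|) ^ d) =o[atBot] fun t => exp (-a * t) := by
  have hlim : Tendsto (fun t : ℝ => 1 - t) atBot atTop :=
    tendsto_atTop_add_const_left _ _ tendsto_neg_atBot_atTop
  have h := ((isLittleO_rpow_exp_pos_mul_atTop d ha).comp_tendsto hlim).const_mul_right'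
    (isUnit_iff_ne_zero.mpr (exp_ne_zero (-a)))
  refine (h.congr' ?_ ?_)
  · filter_upwards [eventually_le_atBot 0] with t ht
    simp [abs_of_nonpos ht, sub_eq_add_neg]
  · filter_upwards with t
    simp only [Function.comp_apply, ← exp_add]
    ring_nf

theorem exists_le_mul_rpow_lt_mul_exp {a c : ℝ} (ha : 0 < a) (hc : 0 < c) (b C d : ℝ) :
    ∃ t ≤ b, C * (1 + |t|) ^ d < c * exp (a * (b - t)) := by
  have hk : 0 < c * exp (a * b) := mul_pos hc (exp_pos _)
  have hsmall := ((isLittleO_one_add_abs_rpow_exp_neg_mul_atBot d ha).const_mul_left C).def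
    (half_pos hk)
  obtain ⟨t, hnorm, htb⟩ := (hsmall.and (eventually_le_atBot b)).exists
  refine ⟨t, htb, ?_⟩
  rw [Real.norm_of_nonneg (exp_pos _).le] at hnorm
  calc C * (1 + |t|) ^ d ≤ c * exp (a * b) / 2 * exp (-a * t) := (le_abs_self _).trans hnorm
    _ < c * exp (a * b) * exp (-a * t) := by gcongr; linarith
    _ = c * exp (a * (b - t)) := by rw [mul_assoc, ← exp_add]; ring_nf

theorem ancient_frequency_vanishes_polynomial_growth_general
    (q : ℝ) (hq : 0 < q)
    (N : ℝ → ℝ)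
    (hNnonpos : ∀ t ∈ Iio (0 : ℝ), N t ≤ 0)
    (hNmono : MonotoneOn N (Iio (0 : ℝ)))
    (I : ℝ → ℝ)
    (hIpos : ∀ t ∈ Iio (0 : ℝ), 0 < I t)
    (hlog : ∀ t ∈ Iio (0 : ℝ),
      HasDerivAt (fun s => Real.log (I s)) ((q + 1) * N t) t)
    (C d : ℝ)
    (hgrowth : ∀ t ∈ Iio (0 : ℝ), I t ≤ C * (1 + |t|) ^ d) :
    ∀ t ∈ Iio (0 : ℝ), N t = 0 := by
  intro t₀ ht₀
  by_contra hne
  have hneg : (q + 1) * N t₀ < 0 :=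
    mul_neg_of_pos_of_neg (by linarith) (lt_of_le_of_ne (hNnonpos t₀ ht₀) hne)
  have hmem : ∀ {x}, x ≤ t₀ → x ∈ Iio (0 : ℝ) := fun hx => lt_of_le_of_lt hx ht₀
  have hderiv_le : ∀ x ≤ t₀, (q + 1) * N x ≤ (q + 1) * N t₀ := fun x hx =>
    mul_le_mul_of_nonneg_left (hNmono (hmem hx) ht₀ hx) (by linarith)
  obtain ⟨t, ht, hbig⟩ := exists_le_mul_rpow_lt_mul_exp (neg_pos.2 hneg) (hIpos t₀ ht₀) t₀ C d
  exact hbig.not_ge <| (mul_exp_le_of_hasDerivAt_log_le (fun x hx => hIpos x (hmem hx))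
    (fun x hx => hlog x (hmem hx)) hderiv_le ht).trans (hgrowth t (hmem ht))

theorem ancient_frequency_vanishes_polynomial_growth
    (q : ℝ) (hq : 0 < q)
    (N : ℝ → ℝ)
    (hNdiff : ∀ t ∈ Iio (0 : ℝ), DifferentiableAt ℝ N t)
    (hNnonpos : ∀ t ∈ Iio (0 : ℝ), N t ≤ 0)
    (hNmono : MonotoneOn N (Iio (0 : ℝ)))
    (I : ℝ → ℝ)
    (hIpos : ∀ t ∈ Iio (0 : ℝ), 0 < I t)
    (hlog : ∀ t ∈ Iio (0 : ℝ),
      HasDerivAt (fun s => Real.log (I s)) ((q + 1) * N t) t)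
    (C d : ℝ) (hC : 0 < C) (hd : 0 < d)
    (hgrowth : ∀ t ∈ Iio (0 : ℝ), I t ≤ C * (1 + |t|) ^ d) :
    ∀ t ∈ Iio (0 : ℝ), N t = 0 :=
  ancient_frequency_vanishes_polynomial_growth_general q hq N hNnonpos hNmono I hIpos hlog C d
    hgrowth
end

section
/- Let I, D : [a,b] → ℝ with I > 0 differentiable, D ≤ 0, I'(t) = (q+1)·D(t), and suppose D'·I − ((pq)/(q+1))·D·I' ≥ 0 pointwise (monotonicity of the generalized frequency numerator), where p > 1, q > 0 and δ := q(p−1)−1 ≥ 0. Then N := D/I satisfies N'(t) ≥ δ·N(t)², and N is monotone increasing. -/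
/-!
With `I' = (q + 1) D` and `δ + (q + 1) = p q`, the quotient rule gives the identity
`(D / I)' - δ (D / I)² = (D' I - (p q / (q + 1)) D I') / I²`, whose right-hand side is
nonnegative by the monotonicity hypothesis. Hence `(D / I)' ≥ δ (D / I)² ≥ 0`, and `D / I`
is monotone.
-/

open Set

theorem quotient_deriv_sub_mul_sq_eq {p q δ d d' i i' : ℝ} (hq : q + 1 ≠ 0)
    (hδ : δ = q * (p - 1) - 1) (hi' : i' = (q + 1) * d) :
    (d' * i - d * i') / i ^ 2 - δ * (d / i) ^ 2 =
      (d' * i - p * q / (q + 1) * d * i') / i ^ 2 := by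
  subst hδ hi'
  field_simp
  ring

theorem monotoneOn_of_hasDerivAt_nonneg {s : Set ℝ} (hs : Convex ℝ s) {f f' : ℝ → ℝ}
    (hf : ∀ x ∈ s, HasDerivAt f (f' x) x) (hf' : ∀ x ∈ s, 0 ≤ f' x) : MonotoneOn f s :=
  monotoneOn_of_hasDerivWithinAt_nonneg hs
    (fun x hx => (hf x hx).continuousAt.continuousWithinAt)
    (fun x hx => (hf x (interior_subset hx)).hasDerivWithinAt)
    (fun x hx => hf' x (interior_subset hx))

theorem frequency_riccati_from_generalized_monotonicity_general
    (a b p q δ : ℝ) (hq : 0 < q)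
    (hδdef : δ = q * (p - 1) - 1) (hδ : 0 ≤ δ)
    (I I' D D' : ℝ → ℝ)
    (hIpos : ∀ t ∈ Icc a b, 0 < I t)
    (hIderiv : ∀ t ∈ Icc a b, HasDerivAt I (I' t) t)
    (hDderiv : ∀ t ∈ Icc a b, HasDerivAt D (D' t) t)
    (hI' : ∀ t ∈ Icc a b, I' t = (q + 1) * D t)
    (hNG : ∀ t ∈ Icc a b, 0 ≤ D' t * I t - p * q / (q + 1) * D t * I' t) :
    (∀ t ∈ Icc a b, δ * (D t / I t) ^ 2 ≤ deriv (fun s => D s / I s) t) ∧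
    MonotoneOn (fun t => D t / I t) (Icc a b) := by
  have hN : ∀ t ∈ Icc a b, HasDerivAt (fun s => D s / I s)
      ((D' t * I t - D t * I' t) / I t ^ 2) t := fun t ht =>
    (hDderiv t ht).div (hIderiv t ht) (hIpos t ht).ne'
  have hRiccati : ∀ t ∈ Icc a b,
      δ * (D t / I t) ^ 2 ≤ (D' t * I t - D t * I' t) / I t ^ 2 := fun t ht => by
    rw [← sub_nonneg, quotient_deriv_sub_mul_sq_eq (by positivity) hδdef (hI' t ht)]
    exact div_nonneg (hNG t ht) (sq_nonneg _)
  refine ⟨fun t ht => (hN t ht).deriv ▸ hRiccati t ht, ?_⟩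
  exact monotoneOn_of_hasDerivAt_nonneg (convex_Icc a b) hN
    fun t ht => (mul_nonneg hδ (sq_nonneg _)).trans (hRiccati t ht)

theorem frequency_riccati_from_generalized_monotonicity
    (a b p q δ : ℝ) (hab : a < b) (hp : 1 < p) (hq : 0 < q)
    (hδdef : δ = q * (p - 1) - 1) (hδ : 0 ≤ δ)
    (I I' D D' : ℝ → ℝ)
    (hIpos : ∀ t ∈ Icc a b, 0 < I t)
    (hIderiv : ∀ t ∈ Icc a b, HasDerivAt I (I' t) t)
    (hDderiv : ∀ t ∈ Icc a b, HasDerivAt D (D' t) t)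
    (hDnonpos : ∀ t ∈ Icc a b, D t ≤ 0)
    (hI' : ∀ t ∈ Icc a b, I' t = (q + 1) * D t)
    (hNG : ∀ t ∈ Icc a b, 0 ≤ D' t * I t - p * q / (q + 1) * D t * I' t) :
    (∀ t ∈ Icc a b, δ * (D t / I t) ^ 2 ≤ deriv (fun s => D s / I s) t) ∧
    MonotoneOn (fun t => D t / I t) (Icc a b) :=
  frequency_riccati_from_generalized_monotonicity_general a b p q δ hq hδdef hδ I I' D D' hIpos
    hIderiv hDderiv hI' hNG
end
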